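/- arXiv:1808.02843 — 6 statements merged into one kernel-verified Lean document; each statement's English description precedes it below -/
import Mathlib

section
/- The ℓ¹ norm φ(x) = Σₙ |xₙ| on ℓ¹(ℝ) is Gâteaux differentiable at x if and only if xₙ ≠ 0 for all n, and in that case the Gâteaux derivative is given by dφ(x)(h) = Σₙ sign(xₙ)·hₙ. -/
/-!
If `xᵢ ≠ 0`, then `t ↦ |xᵢ + t hᵢ|` is differentiable at `0` with derivative `sign xᵢ · hᵢ`,
and its difference quotients are bounded by `|hᵢ|`, which is summable; dominated convergence
moves the limit inside the sum, and `h ↦ ∑ sign xᵢ · hᵢ` is continuous since the weights are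
bounded by `1`. If `xᵢ = 0`, moving along the `i`-th unit vector changes the sum by exactly `|t|`,
and `|t| / t` has the two different one-sided limits `±1` at `0`.
-/

open Filter Topology
open scoped lp

/-- Gâteaux differentiability of `φ` at `x` with (continuous linear) derivative `u`. -/
def IsGateauxDerivAt {X : Type*} [NormedAddCommGroup X] [NormedSpace ℝ X]
    (φ : X → ℝ) (u : X →L[ℝ] ℝ) (x : X) : Prop :=
  ∀ h : X, Tendsto (fun t : ℝ => (φ (x + t • h) - φ x) / t) (𝓝[≠] (0 : ℝ)) (𝓝 (u h))

theorem Real.abs_sign_le_one (a : ℝ) : |Real.sign a| ≤ 1 := by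
  rcases Real.sign_apply_eq a with h | h | h <;> simp [h]

theorem Real.sign_eq_signType_sign {a : ℝ} (ha : a ≠ 0) :
    Real.sign a = (SignType.sign a : ℝ) := by
  rcases ha.lt_or_gt with h | h <;> simp [h, Real.sign_of_neg, Real.sign_of_pos]

theorem tendsto_abs_add_mul_sub_abs_div {a : ℝ} (ha : a ≠ 0) (b : ℝ) :
    Tendsto (fun t => (|a + t * b| - |a|) / t) (𝓝[≠] 0) (𝓝 (Real.sign a * b)) := by
  have hderiv : HasDerivAt (fun t => |a + t * b|) (Real.sign a * b) 0 := by
    rw [Real.sign_eq_signType_sign ha]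
    have := (hasDerivAt_abs (x := a + 0 * b) (by simpa using ha)).comp (0 : ℝ)
      (((hasDerivAt_id (0 : ℝ)).mul_const b).const_add a)
    simp only [zero_mul, add_zero, one_mul] at this
    exact this
  simpa [div_eq_inv_mul] using hderiv.tendsto_slope_zero

theorem abs_abs_add_mul_sub_abs_div_le (a b t : ℝ) : |(|a + t * b| - |a|) / t| ≤ |b| := by
  rcases eq_or_ne t 0 with rfl | ht
  · simp
  rw [abs_div, div_le_iff₀ (abs_pos.mpr ht), mul_comm |b|, ← abs_mul]
  simpa using abs_abs_sub_abs_le_abs_sub (a + t * b) a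

theorem not_tendsto_abs_div_nhdsNE (L : ℝ) :
    ¬ Tendsto (fun t : ℝ => |t| / t) (𝓝[≠] 0) (𝓝 L) := by
  intro hL
  have hright : Tendsto (fun t : ℝ => |t| / t) (𝓝[>] 0) (𝓝 1) :=
    tendsto_const_nhds.congr' <| eventually_nhdsWithin_of_forall fun t (ht : 0 < t) => by
      beta_reduce; rw [abs_of_pos ht, div_self ht.ne']
  have hleft : Tendsto (fun t : ℝ => |t| / t) (𝓝[<] 0) (𝓝 (-1)) :=
    tendsto_const_nhds.congr' <| eventually_nhdsWithin_of_forall fun t (ht : t < 0) => by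
      beta_reduce; rw [abs_of_neg ht, neg_div, div_self ht.ne]
  have h1 := tendsto_nhds_unique (hL.mono_left (nhdsGT_le_nhdsNE 0)) hright
  have h2 := tendsto_nhds_unique (hL.mono_left (nhdsLT_le_nhdsNE 0)) hleft
  linarith

namespace lp

variable {ι : Type*}

theorem add_smul_apply {p : ENNReal} (x h : lp (fun _ : ι => ℝ) p) (t : ℝ) (i : ι) :
    (x + t • h) i = x i + t * h i :=
  rfl

theorem summable_abs (y : ℓ¹(ι, ℝ)) : Summable fun i => |y i| :=
  y.2.summable_of_one.abs

theorem norm_eq_tsum_abs (y : ℓ¹(ι, ℝ)) : ‖y‖ = ∑' i, |y i| := by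
  simp [norm_eq_tsum_rpow (by norm_num : 0 < (1 : ENNReal).toReal)]

theorem summable_mul_of_abs_le {c : ι → ℝ} {C : ℝ} (hc : ∀ i, |c i| ≤ C) (y : ℓ¹(ι, ℝ)) :
    Summable fun i => c i * y i :=
  .of_norm_bounded ((summable_abs y).mul_left C) fun i => by
    rw [Real.norm_eq_abs, abs_mul]
    exact mul_le_mul_of_nonneg_right (hc i) (abs_nonneg _)

noncomputable def weightedTsumCLM {c : ι → ℝ} {C : ℝ} (hc : ∀ i, |c i| ≤ C) :
    ℓ¹(ι, ℝ) →L[ℝ] ℝ :=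
  LinearMap.mkContinuous
    { toFun y := ∑' i, c i * y i
      map_add' y z := by
        simp only [coeFn_add, Pi.add_apply, mul_add]
        exact (summable_mul_of_abs_le hc y).tsum_add (summable_mul_of_abs_le hc z)
      map_smul' r y := by
        simp only [coeFn_smul, Pi.smul_apply, smul_eq_mul, RingHom.id_apply, mul_left_comm _ r]
        exact tsum_mul_left }
    C fun y => by
      have hsum := (summable_mul_of_abs_le hc y).norm
      rw [norm_eq_tsum_abs, ← tsum_mul_left]
      refine (norm_tsum_le_tsum_norm hsum).trans <|
        hsum.tsum_le_tsum (fun i => ?_) ((summable_abs y).mul_left C)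
      rw [Real.norm_eq_abs, abs_mul]
      exact mul_le_mul_of_nonneg_right (hc i) (abs_nonneg _)

theorem tsum_abs_add_smul_sub_div (x h : ℓ¹(ι, ℝ)) (t : ℝ) :
    (∑' i, |(x + t • h) i| - ∑' i, |x i|) / t = ∑' i, (|x i + t * h i| - |x i|) / t := by
  rw [← (summable_abs _).tsum_sub (summable_abs x), ← tsum_div_const]
  rfl

theorem tendsto_tsum_abs_add_smul_sub_div {x : ℓ¹(ι, ℝ)} (hx : ∀ i, x i ≠ 0) (h : ℓ¹(ι, ℝ)) :
    Tendsto (fun t : ℝ => (∑' i, |(x + t • h) i| - ∑' i, |x i|) / t) (𝓝[≠] 0)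
      (𝓝 (∑' i, Real.sign (x i) * h i)) := by
  simp only [tsum_abs_add_smul_sub_div]
  exact tendsto_tsum_of_dominated_convergence (summable_abs h)
    (fun i => tendsto_abs_add_mul_sub_abs_div (hx i) (h i))
    (.of_forall fun t i => abs_abs_add_mul_sub_abs_div_le _ _ _)

theorem tsum_abs_add_smul_single_sub [DecidableEq ι] {x : ℓ¹(ι, ℝ)} {i : ι} (hx : x i = 0)
    (t : ℝ) : ∑' j, |(x + t • lp.single (E := fun _ : ι => ℝ) 1 i 1) j| - ∑' j, |x j| = |t| := by
  rw [← (summable_abs _).tsum_sub (summable_abs x), tsum_eq_single i fun j hj => ?_]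
  · simp [add_smul_apply, hx]
  · simp [add_smul_apply, hj]

theorem apply_ne_zero_of_isGateauxDerivAt_tsum_abs {x : ℓ¹(ι, ℝ)} {u : ℓ¹(ι, ℝ) →L[ℝ] ℝ}
    (hu : IsGateauxDerivAt (fun y : ℓ¹(ι, ℝ) => ∑' j, |y j|) u x) (i : ι) : x i ≠ 0 := by
  classical
  intro hx
  apply not_tendsto_abs_div_nhdsNE (u (lp.single 1 i 1))
  simpa only [tsum_abs_add_smul_single_sub hx] using hu (lp.single 1 i 1)

end lp

/-- The ℓ¹ norm `φ x = ∑ₙ |xₙ|` is Gâteaux differentiable at `x` iff `xₙ ≠ 0` for all `n`,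
and in that case the Gâteaux derivative is `h ↦ ∑ₙ sign (xₙ) * hₙ`. -/
theorem l1_norm_gateaux (x : lp (fun _ : ℕ => ℝ) 1) :
    ((∃ u : lp (fun _ : ℕ => ℝ) 1 →L[ℝ] ℝ,
        IsGateauxDerivAt (fun y : lp (fun _ : ℕ => ℝ) 1 => ∑' n, |y n|) u x)
      ↔ ∀ n : ℕ, x n ≠ 0) ∧
    (∀ u : lp (fun _ : ℕ => ℝ) 1 →L[ℝ] ℝ,
      IsGateauxDerivAt (fun y : lp (fun _ : ℕ => ℝ) 1 => ∑' n, |y n|) u x →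
      ∀ h : lp (fun _ : ℕ => ℝ) 1, u h = ∑' n, Real.sign (x n) * h n) := by
  refine ⟨⟨fun ⟨_, hu⟩ => lp.apply_ne_zero_of_isGateauxDerivAt_tsum_abs hu, fun hx => ?_⟩,
    fun u hu h => ?_⟩
  · exact ⟨lp.weightedTsumCLM fun n => Real.abs_sign_le_one (x n),
      lp.tendsto_tsum_abs_add_smul_sub_div hx⟩
  · exact tendsto_nhds_unique (hu h) <|
      lp.tendsto_tsum_abs_add_smul_sub_div (lp.apply_ne_zero_of_isGateauxDerivAt_tsum_abs hu) h
end

section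
/- Let T be a compact Hausdorff space. The sup-norm φ(x) = sup_{t∈T} |x(t)| on C(T) is Gâteaux differentiable at x ≠ 0 if and only if |x| attains its supremum at exactly one point t₀ ∈ T; in that case the Gâteaux derivative is h ↦ sign(x(t₀))·h(t₀). -/
/-!
Evaluating at a maximiser `τ` of `|x|` gives `‖x‖ + t * (sign (x τ) * h τ) ≤ ‖x + t • h‖` for all
`t`, so `t ↦ ‖x + t • h‖ - t * (sign (x τ) * h τ)` is minimal at `0` and any Gâteaux derivative
equals `h ↦ sign (x τ) * h τ`, whichever maximiser `τ` is used. An Urysohn function vanishing at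
one maximiser and equal to `1` at another therefore rules out two maximisers.

Conversely, if `t₀` is the only maximiser, compactness keeps `|x|` a fixed distance below `‖x‖`
outside any neighbourhood of `t₀`. So for small `t` only points near `t₀` matter, where `x` has the
sign of `x t₀` and `h` is close to `h t₀`; this gives the matching upper bound up to `o(t)`.
-/

open Filter Topology

theorem isGateauxDerivAt_iff_forall_hasDerivAt {X : Type*} [NormedAddCommGroup X]
    [NormedSpace ℝ X] {φ : X → ℝ} {u : X →L[ℝ] ℝ} {x : X} :
    IsGateauxDerivAt φ u x ↔ ∀ h : X, HasDerivAt (fun t : ℝ => φ (x + t • h)) (u h) 0 := by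
  simp only [IsGateauxDerivAt, hasDerivAt_iff_tendsto_slope_zero, zero_add, zero_smul, add_zero,
    smul_eq_mul, div_eq_inv_mul]

theorem abs_add_eq_mul_add_of_abs_le {R : Type*} [CommRing R] [LinearOrder R]
    [IsStrictOrderedRing R] {s a b : R} (hs : |s| = 1) (hb : |b| ≤ s * a) :
    |a + b| = s * (a + b) := by
  have hsb : -|b| ≤ s * b := by simpa [abs_mul, hs] using neg_abs_le (s * b)
  rw [← abs_of_nonneg (by linarith [mul_add s a b] : 0 ≤ s * (a + b)), abs_mul, hs, one_mul]

namespace Real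

theorem sign_mul_self_eq_abs (r : ℝ) : sign r * r = |r| := by
  rcases lt_trichotomy r 0 with hr | rfl | hr
  · rw [sign_of_neg hr, abs_of_neg hr, neg_one_mul]
  · simp
  · rw [sign_of_pos hr, abs_of_pos hr, one_mul]

theorem abs_sign_of_ne_zero {r : ℝ} (hr : r ≠ 0) : |sign r| = 1 := by
  rcases sign_apply_eq_of_ne_zero r hr with h | h <;> simp [h]

theorem abs_sign_le_one_s2 (r : ℝ) : |sign r| ≤ 1 := by
  rcases eq_or_ne r 0 with rfl | hr
  · simp
  · exact (abs_sign_of_ne_zero hr).le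

theorem sign_mul_le_abs (r s : ℝ) : sign r * s ≤ |s| :=
  calc sign r * s ≤ |sign r * s| := le_abs_self _
    _ = |sign r| * |s| := abs_mul _ _
    _ ≤ |s| := mul_le_of_le_one_left (abs_nonneg s) (abs_sign_le_one_s2 r)

end Real

namespace ContinuousMap

variable {T : Type*} [TopologicalSpace T] [CompactSpace T] {x : C(T, ℝ)}

theorem abs_apply_le_norm (x : C(T, ℝ)) (τ : T) : |x τ| ≤ ‖x‖ :=
  x.norm_coe_le_norm τ

theorem exists_abs_apply_eq_norm [Nonempty T] (x : C(T, ℝ)) : ∃ τ, |x τ| = ‖x‖ := by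
  obtain ⟨τ, -, hτ⟩ :=
    isCompact_univ.exists_isMaxOn Set.univ_nonempty (continuous_abs.comp x.continuous).continuousOn
  exact ⟨τ, le_antisymm (x.abs_apply_le_norm τ) <|
    (x.norm_le_of_nonempty).2 fun σ => hτ (Set.mem_univ σ)⟩

theorem norm_add_le_norm_add_smul {τ : T} (hτ : |x τ| = ‖x‖) (h : C(T, ℝ)) (t : ℝ) :
    ‖x‖ + t * (Real.sign (x τ) * h τ) ≤ ‖x + t • h‖ :=
  calc ‖x‖ + t * (Real.sign (x τ) * h τ) = Real.sign (x τ) * (x + t • h) τ := by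
        rw [← hτ, ← Real.sign_mul_self_eq_abs]; simp only [add_apply, smul_apply, smul_eq_mul]; ring
    _ ≤ |(x + t • h) τ| := Real.sign_mul_le_abs _ _
    _ ≤ ‖x + t • h‖ := abs_apply_le_norm _ τ

theorem exists_pos_abs_apply_le_norm_sub_of_notMem {t₀ : T}
    (huniq : ∀ t : T, |x t| = ‖x‖ → t = t₀) {U : Set T} (hU : IsOpen U) (ht₀U : t₀ ∈ U) :
    ∃ δ, 0 < δ ∧ ∀ τ ∉ U, |x τ| ≤ ‖x‖ - δ := by
  obtain ⟨δ, hδ, hgap⟩ :=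
    hU.isClosed_compl.isCompact.exists_forall_le' (f := fun τ => ‖x‖ - |x τ|)
    (continuous_const.sub (continuous_abs.comp x.continuous)).continuousOn
    fun τ hτ => sub_pos.2 <| (x.abs_apply_le_norm τ).lt_of_ne fun he => hτ (huniq τ he ▸ ht₀U)
  exact ⟨δ, hδ, fun τ hτ => le_sub_comm.1 (hgap τ hτ)⟩

theorem eventually_norm_add_smul_le {t₀ : T} (hx : x ≠ 0) (ht₀ : |x t₀| = ‖x‖)
    (huniq : ∀ t : T, |x t| = ‖x‖ → t = t₀) (h : C(T, ℝ)) {ε : ℝ} (hε : 0 < ε) :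
    ∀ᶠ t in 𝓝 (0 : ℝ), ‖x + t • h‖ ≤ ‖x‖ + t * (Real.sign (x t₀) * h t₀) + ε * |t| := by
  have : Nonempty T := ⟨t₀⟩
  set s := Real.sign (x t₀)
  have hx_pos : 0 < ‖x‖ := norm_pos_iff.2 hx
  have hs : |s| = 1 := Real.abs_sign_of_ne_zero fun h0 => by simp [h0] at ht₀; linarith
  have hsx : s * x t₀ = ‖x‖ := by rw [Real.sign_mul_self_eq_abs, ht₀]
  set U : Set T := {τ | |h τ - h t₀| < ε ∧ ‖x‖ / 2 < s * x τ}
  have hU : IsOpen U :=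
    (isOpen_lt (continuous_abs.comp (h.continuous.sub continuous_const)) continuous_const).inter
      (isOpen_lt continuous_const (continuous_const.mul x.continuous))
  obtain ⟨δ, hδ, hgap⟩ := exists_pos_abs_apply_le_norm_sub_of_notMem huniq hU
    ⟨by simpa using hε, show ‖x‖ / 2 < s * x t₀ by linarith⟩
  have hsmall : ∀ᶠ t in 𝓝 (0 : ℝ), |t| * ‖h‖ < min (δ / 2) (‖x‖ / 2) := by
    refine Tendsto.eventually_lt_const (v := 0) (lt_min (by positivity) (by positivity)) ?_
    have hc : Continuous fun t : ℝ => |t| * ‖h‖ := by fun_prop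
    simpa using hc.tendsto 0
  filter_upwards [hsmall] with t ht
  have hth : ∀ τ, |t * h τ| ≤ |t| * ‖h‖ := fun τ => by
    rw [abs_mul]; exact mul_le_mul_of_nonneg_left (h.abs_apply_le_norm τ) (abs_nonneg t)
  refine (x + t • h).norm_le_of_nonempty.2 fun τ => ?_
  simp only [add_apply, smul_apply, smul_eq_mul, Real.norm_eq_abs]
  by_cases hτ : τ ∈ U
  · obtain ⟨hhτ, hxτ⟩ := hτ
    have hsxτ : s * x τ ≤ ‖x‖ := (Real.sign_mul_le_abs _ _).trans (x.abs_apply_le_norm τ)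
    have hdev : t * s * (h τ - h t₀) ≤ ε * |t| :=
      calc t * s * (h τ - h t₀) ≤ |t * s * (h τ - h t₀)| := le_abs_self _
        _ = |t| * |h τ - h t₀| := by rw [abs_mul, abs_mul, hs, mul_one]
        _ ≤ ε * |t| := by rw [mul_comm ε]; exact mul_le_mul_of_nonneg_left hhτ.le (abs_nonneg t)
    calc |x τ + t * h τ| = s * (x τ + t * h τ) :=
          abs_add_eq_mul_add_of_abs_le hs (by linarith [hth τ, min_le_right (δ / 2) (‖x‖ / 2)])
      _ = s * x τ + t * (s * h t₀) + t * s * (h τ - h t₀) := by ring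
      _ ≤ _ := by linarith
  · have hst₀ : -(|t| * ‖h‖) ≤ t * (s * h t₀) := by
      have := neg_abs_le (t * (s * h t₀))
      rw [mul_left_comm, abs_mul, hs, one_mul] at this
      linarith [hth t₀]
    calc |x τ + t * h τ| ≤ |x τ| + |t * h τ| := abs_add_le _ _
      _ ≤ ‖x‖ - δ + |t| * ‖h‖ := by linarith [hgap τ hτ, hth τ]
      _ ≤ _ := by nlinarith [min_le_left (δ / 2) (‖x‖ / 2), abs_nonneg t]

theorem hasDerivAt_norm_add_smul {t₀ : T} (hx : x ≠ 0) (ht₀ : |x t₀| = ‖x‖)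
    (huniq : ∀ t : T, |x t| = ‖x‖ → t = t₀) (h : C(T, ℝ)) :
    HasDerivAt (fun t : ℝ => ‖x + t • h‖) (Real.sign (x t₀) * h t₀) 0 := by
  rw [hasDerivAt_iff_isLittleO, Asymptotics.isLittleO_iff]
  intro ε hε
  filter_upwards [eventually_norm_add_smul_le hx ht₀ huniq h hε] with t ht
  have hlow := norm_add_le_norm_add_smul ht₀ h t
  simp only [zero_smul, add_zero, sub_zero, smul_eq_mul, Real.norm_eq_abs]
  rw [abs_of_nonneg (by linarith)]
  linarith

theorem eq_sign_mul_of_hasDerivAt_norm_add_smul {τ : T} (hτ : |x τ| = ‖x‖) {h : C(T, ℝ)} {d : ℝ}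
    (hd : HasDerivAt (fun t : ℝ => ‖x + t • h‖) d 0) : d = Real.sign (x τ) * h τ := by
  have hmin : IsLocalMin (fun t : ℝ => ‖x + t • h‖ - t * (Real.sign (x τ) * h τ)) 0 :=
    Eventually.of_forall fun t => by
      simpa using le_sub_iff_add_le.2 (norm_add_le_norm_add_smul hτ h t)
  linarith [hmin.hasDerivAt_eq_zero (hd.sub (hasDerivAt_mul_const _))]

theorem apply_eq_sign_mul_of_isGateauxDerivAt_norm {u : C(T, ℝ) →L[ℝ] ℝ}
    (hu : IsGateauxDerivAt (fun y : C(T, ℝ) => ‖y‖) u x) {τ : T} (hτ : |x τ| = ‖x‖)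
    (h : C(T, ℝ)) : u h = Real.sign (x τ) * h τ :=
  eq_sign_mul_of_hasDerivAt_norm_add_smul hτ (isGateauxDerivAt_iff_forall_hasDerivAt.1 hu h)

theorem eq_of_isGateauxDerivAt_norm [T2Space T] (hx : x ≠ 0) {u : C(T, ℝ) →L[ℝ] ℝ}
    (hu : IsGateauxDerivAt (fun y : C(T, ℝ) => ‖y‖) u x) {τ₁ τ₂ : T} (h₁ : |x τ₁| = ‖x‖)
    (h₂ : |x τ₂| = ‖x‖) : τ₁ = τ₂ := by
  by_contra hne
  obtain ⟨f, hf₁, hf₂, -⟩ := exists_continuous_zero_one_of_isClosed isClosed_singleton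
    isClosed_singleton (Set.disjoint_singleton.2 hne)
  have e₁ := apply_eq_sign_mul_of_isGateauxDerivAt_norm hu h₁ f
  have e₂ := apply_eq_sign_mul_of_isGateauxDerivAt_norm hu h₂ f
  rw [hf₁ rfl, Pi.zero_apply, mul_zero] at e₁
  rw [hf₂ rfl, Pi.one_apply, mul_one, e₁, eq_comm, Real.sign_eq_zero_iff] at e₂
  rw [e₂, abs_zero, eq_comm, norm_eq_zero] at h₂
  exact hx h₂

end ContinuousMap

/-- For `T` compact Hausdorff, the sup-norm on `C(T, ℝ)` is Gâteaux differentiable at `x ≠ 0`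
iff `|x|` attains its supremum at exactly one point `t₀`, in which case the derivative is
`h ↦ sign (x t₀) * h t₀`. -/
theorem supnorm_gateaux_iff_unique_max {T : Type*} [TopologicalSpace T] [CompactSpace T]
    [T2Space T] (x : C(T, ℝ)) (hx : x ≠ 0) :
    ((∃ u : C(T, ℝ) →L[ℝ] ℝ, IsGateauxDerivAt (fun y : C(T, ℝ) => ‖y‖) u x)
      ↔ ∃! t₀ : T, |x t₀| = ‖x‖) ∧
    (∀ t₀ : T, |x t₀| = ‖x‖ → (∀ t : T, |x t| = ‖x‖ → t = t₀) →
      ∀ u : C(T, ℝ) →L[ℝ] ℝ, IsGateauxDerivAt (fun y : C(T, ℝ) => ‖y‖) u x →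
        ∀ h : C(T, ℝ), u h = Real.sign (x t₀) * h t₀) := by
  refine ⟨⟨fun ⟨u, hu⟩ => ?_, fun ⟨t₀, ht₀, huniq⟩ => ?_⟩,
    fun t₀ ht₀ _ u hu => ContinuousMap.apply_eq_sign_mul_of_isGateauxDerivAt_norm hu ht₀⟩
  · have : Nonempty T := by
      by_contra hT
      exact hx (ContinuousMap.ext fun t => absurd ⟨t⟩ hT)
    obtain ⟨τ, hτ⟩ := x.exists_abs_apply_eq_norm
    exact ⟨τ, hτ, fun σ hσ => ContinuousMap.eq_of_isGateauxDerivAt_norm hx hu hσ hτ⟩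
  · exact ⟨Real.sign (x t₀) • ContinuousMap.evalCLM ℝ t₀,
      isGateauxDerivAt_iff_forall_hasDerivAt.2
        (ContinuousMap.hasDerivAt_norm_add_smul hx ht₀ huniq)⟩
end

section
/- Let x ∈ ℓ∞(ℝ) be a bounded sequence for which there exist p ∈ ℕ and ε > 0 with |x_k| < |x_p| − ε for all k ≠ p. Then the sup norm φ(y) = supₙ |yₙ| is Fréchet differentiable at x with derivative h ↦ sign(x_p)·h_p. In fact, for all h with ‖h‖ < ε/2 one has φ(x+h) − φ(x) = sign(x_p)·h_p exactly. -/
/-!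
A perturbation `h` with `‖h‖ < ε / 2` cannot move any coordinate of `x + h` above
`|x p + h p|`, so near `x` the sup norm coincides with `y ↦ |y p|`. Since `|h p| ≤ |x p|`,
the sign of `x p + h p` agrees with that of `x p` (or the latter vanishes), so `|y p|` is the
affine function `‖x‖ + sign (x p) * (y p - x p)` there, whose derivative is the functional.
-/

open Filter Topology

theorem Real.abs_add_sub_abs_eq_sign_mul {a h : ℝ} (hh : |h| ≤ |a|) :
    |a + h| - |a| = Real.sign a * h := by
  rcases lt_trichotomy a 0 with ha | rfl | ha
  · rw [abs_of_neg ha] at hh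
    rw [sign_of_neg ha, abs_of_neg ha, abs_of_nonpos (by linarith [le_abs_self h])]
    ring
  · simp_all
  · rw [abs_of_pos ha] at hh
    rw [sign_of_pos ha, abs_of_pos ha, abs_of_nonneg (by linarith [neg_abs_le h])]
    ring

theorem hasFDerivAt_of_eventually_sub_eq {𝕜 E F : Type*} [NontriviallyNormedField 𝕜]
    [NormedAddCommGroup E] [NormedSpace 𝕜 E] [NormedAddCommGroup F] [NormedSpace 𝕜 F]
    {f : E → F} {u : E →L[𝕜] F} {x : E} (h : ∀ᶠ y in 𝓝 x, f y - f x = u (y - x)) :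
    HasFDerivAt f u x := by
  refine (u.hasFDerivAt.sub_const (u x) |>.const_add (f x)).congr_of_eventuallyEq ?_
  filter_upwards [h] with y hy
  rw [← map_sub, ← hy, add_sub_cancel]

namespace lp

variable {ι : Type*} {E : ι → Type*} [∀ i, NormedAddCommGroup (E i)]

theorem norm_eq_norm_apply_of_forall_le {f : lp E ⊤} {p : ι} (hf : ∀ k, ‖f k‖ ≤ ‖f p‖) :
    ‖f‖ = ‖f p‖ :=
  have : Nonempty ι := ⟨p⟩
  le_antisymm (norm_le_of_forall_le' _ hf) (norm_apply_le_norm ENNReal.top_ne_zero f p)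

theorem norm_add_eq_norm_apply_add {x h : lp E ⊤} {p : ι} {ε : ℝ}
    (hdom : ∀ k, k ≠ p → ‖x k‖ < ‖x p‖ - ε) (hh : ‖h‖ < ε / 2) :
    ‖x + h‖ = ‖x p + h p‖ := by
  refine norm_eq_norm_apply_of_forall_le fun k => ?_
  rcases eq_or_ne k p with rfl | hk
  · exact le_rfl
  have hhk := norm_apply_le_norm ENNReal.top_ne_zero h k
  have hhp := norm_apply_le_norm ENNReal.top_ne_zero h p
  calc ‖x k + h k‖ ≤ ‖x k‖ + ‖h k‖ := norm_add_le _ _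
    _ ≤ ‖x p‖ - ‖h p‖ := by linarith [hdom k hk]
    _ ≤ ‖x p + h p‖ := norm_sub_le_norm_add _ _

end lp

/-- If `x ∈ ℓ∞(ℝ)` has a strictly dominant coordinate `p` (with gap `ε`), then the sup norm is
Fréchet differentiable at `x` with derivative `h ↦ sign (x p) * h p`; in fact
`‖x + h‖ - ‖x‖ = sign (x p) * h p` exactly whenever `‖h‖ < ε / 2`. -/
theorem linf_norm_frechet_at_dominant (x : lp (fun _ : ℕ => ℝ) ⊤) (p : ℕ) (ε : ℝ)
    (hε : 0 < ε) (hdom : ∀ k : ℕ, k ≠ p → |x k| < |x p| - ε) :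
    ∃ u : lp (fun _ : ℕ => ℝ) ⊤ →L[ℝ] ℝ,
      (∀ h : lp (fun _ : ℕ => ℝ) ⊤, u h = Real.sign (x p) * h p) ∧
      HasFDerivAt (fun y : lp (fun _ : ℕ => ℝ) ⊤ => ‖y‖) u x ∧
      (∀ h : lp (fun _ : ℕ => ℝ) ⊤, ‖h‖ < ε / 2 → ‖x + h‖ - ‖x‖ = Real.sign (x p) * h p) := by
  have hdom_norm : ∀ k, k ≠ p → ‖x k‖ < ‖x p‖ - ε := hdom
  have hx : ‖x‖ = |x p| := by
    simpa using lp.norm_add_eq_norm_apply_add (h := 0) hdom_norm (by simpa using half_pos hε)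
  have hgap : ε ≤ |x p| := by linarith [hdom (p + 1) p.succ_ne_self, abs_nonneg (x (p + 1))]
  have hexact (h : lp (fun _ : ℕ => ℝ) ⊤) (hh : ‖h‖ < ε / 2) :
      ‖x + h‖ - ‖x‖ = Real.sign (x p) * h p := by
    have hhp : |h p| ≤ |x p| := by
      linarith [lp.norm_apply_le_norm ENNReal.top_ne_zero h p, Real.norm_eq_abs (h p)]
    rw [lp.norm_add_eq_norm_apply_add hdom_norm hh, hx]
    exact Real.abs_add_sub_abs_eq_sign_mul hhp
  refine ⟨Real.sign (x p) • lp.evalCLM ℝ _ ⊤ p, fun h => rfl, ?_, hexact⟩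
  refine hasFDerivAt_of_eventually_sub_eq ?_
  filter_upwards [Metric.ball_mem_nhds x (half_pos hε)] with y hy
  have hstep := hexact (y - x) (by rwa [← dist_eq_norm])
  rwa [add_sub_cancel] at hstep
end

section
/- The set B of bounded sequences x ∈ ℓ∞(ℝ) for which there exist p ∈ ℕ and ε > 0 with |x_k| < |x_p| − ε for all k ≠ p is an open subset of ℓ∞(ℝ). -/
open scoped ENNReal

namespace lp

variable {ι : Type*} {E : ι → Type*} [∀ i, NormedAddCommGroup (E i)] {p : ℝ≥0∞} [Fact (1 ≤ p)]

theorem abs_norm_apply_sub_norm_apply_le_dist (x y : lp E p) (i : ι) :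
    |‖x i‖ - ‖y i‖| ≤ dist x y :=
  calc |‖x i‖ - ‖y i‖| ≤ ‖x i - y i‖ := abs_norm_sub_norm_le _ _
    _ = ‖(x - y) i‖ := rfl
    _ ≤ ‖x - y‖ := norm_apply_le_norm (zero_lt_one.trans_le Fact.out).ne' _ i
    _ = dist x y := (dist_eq_norm x y).symm

/-- A gap `ε` above all other coordinates at `x` leaves a gap `ε / 3` on the ball of radius `ε / 3`,
since each coordinate norm moves by less than the radius. -/
theorem isOpen_setOf_exists_dominant_coord :
    IsOpen {x : lp E p | ∃ j : ι, ∃ ε : ℝ, 0 < ε ∧ ∀ k, k ≠ j → ‖x k‖ < ‖x j‖ - ε} := by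
  rw [Metric.isOpen_iff]
  rintro x ⟨j, ε, hε, hx⟩
  refine ⟨ε / 3, by positivity, fun y hy => ⟨j, ε / 3, by positivity, fun k hk => ?_⟩⟩
  have hxy : dist y x < ε / 3 := hy
  have hyk := (abs_le.mp (abs_norm_apply_sub_norm_apply_le_dist y x k)).2
  have hyj := (abs_le.mp (abs_norm_apply_sub_norm_apply_le_dist y x j)).1
  linarith [hx k hk]

end lp

/-- The set of `x ∈ ℓ∞(ℝ)` with a strictly dominant coordinate is open. -/
theorem dominant_set_isOpen :
    IsOpen {x : lp (fun _ : ℕ => ℝ) ⊤ |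
      ∃ p : ℕ, ∃ ε : ℝ, 0 < ε ∧ ∀ k : ℕ, k ≠ p → |x k| < |x p| - ε} :=
  lp.isOpen_setOf_exists_dominant_coord
end

section
/- The seminorm φ(x) = lim supₙ |xₙ| on ℓ∞(ℝ) is not Gâteaux differentiable at any point x ∈ ℓ∞(ℝ). -/
/-!
Let `L = limsupₙ |xₙ|` and pick a strictly increasing `ψ` with `|x_{ψ i}| → L`. Let `hₙ = ±1`, with the
sign of `xₙ`, at the indices `n = ψ (2i)` and `hₙ = 0` elsewhere. For `t > 0` the even indices give
`φ (x + t h) ≥ L + t`, while for every `t` the untouched odd indices give `φ (x + t h) ≥ L`.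
So the right difference quotient in direction `h` is at least `1` and the left one at most `0`.
-/

open Filter Topology

namespace IsGateauxDerivAt

variable {X : Type*} [NormedAddCommGroup X] [NormedSpace ℝ X] {φ : X → ℝ} {u : X →L[ℝ] ℝ}
  {x : X}

theorem le_apply_of_forall_pos (hu : IsGateauxDerivAt φ u x) (h : X) {c : ℝ}
    (hc : ∀ t > 0, φ x + c * t ≤ φ (x + t • h)) : c ≤ u h := by
  refine ge_of_tendsto ((hu h).mono_left (nhdsGT_le_nhdsNE 0)) ?_
  filter_upwards [self_mem_nhdsWithin] with t (ht : 0 < t)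
  rw [le_div_iff₀ ht]
  linarith [hc t ht]

theorem apply_nonpos_of_forall_neg (hu : IsGateauxDerivAt φ u x) (h : X)
    (hc : ∀ t < (0 : ℝ), φ x ≤ φ (x + t • h)) : u h ≤ 0 := by
  refine le_of_tendsto ((hu h).mono_left (nhdsLT_le_nhdsNE 0)) ?_
  filter_upwards [self_mem_nhdsWithin] with t (ht : t < 0)
  exact div_nonpos_of_nonneg_of_nonpos (sub_nonneg.2 (hc t ht)) ht.le

end IsGateauxDerivAt

section LimsupSubsequence

variable {α : Type*} [ConditionallyCompleteLinearOrder α] [TopologicalSpace α] [OrderTopology α]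

theorem exists_strictMono_tendsto_limsup [FirstCountableTopology α] {u : ℕ → α}
    (hc : IsCoboundedUnder (· ≤ ·) atTop u := by isBoundedDefault)
    (hb : IsBoundedUnder (· ≤ ·) atTop u := by isBoundedDefault) :
    ∃ ψ : ℕ → ℕ, StrictMono ψ ∧ Tendsto (u ∘ ψ) atTop (𝓝 (limsup u atTop)) := by
  obtain ⟨σ, hσu, hσ⟩ := exists_seq_tendsto_limsup hc hb
  obtain ⟨φ, hφ, hσφ⟩ := strictMono_subseq_of_tendsto_atTop hσ
  exact ⟨σ ∘ φ, hσφ, hσu.comp hφ.tendsto_atTop⟩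

theorem le_limsup_of_tendsto_comp {ι β : Type*} {l : Filter ι} [NeBot l] {g : Filter β}
    {u : β → α} {v : ι → β} {c : α} (hv : Tendsto v l g) (hc : Tendsto (u ∘ v) l (𝓝 c))
    (hb : IsBoundedUnder (· ≤ ·) g u := by isBoundedDefault) :
    c ≤ limsup u g :=
  hc.limsup_eq ▸ hv.limsup_comp_le_limsup hc.isBoundedUnder_ge.isCoboundedUnder_le hb

end LimsupSubsequence

local notation "ℓ∞" => lp (fun _ : ℕ => ℝ) ⊤

theorem lp.isBoundedUnder_abs (y : ℓ∞) :
    IsBoundedUnder (· ≤ ·) atTop fun n => |y n| :=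
  isBoundedUnder_of ⟨‖y‖, fun n => by
    simpa using lp.norm_apply_le_norm ENNReal.top_ne_zero y n⟩

theorem lp.isCoboundedUnder_abs (y : ℓ∞) :
    IsCoboundedUnder (· ≤ ·) atTop fun n => |y n| :=
  (isBoundedUnder_of ⟨0, fun n => abs_nonneg (y n)⟩).isCoboundedUnder_flip

theorem abs_add_mul_ite_neg (r : ℝ) {t : ℝ} (ht : 0 ≤ t) :
    |r + t * (if r < 0 then -1 else 1)| = |r| + t := by
  split_ifs with hr
  · rw [abs_of_neg hr, abs_of_nonpos (by linarith)]; ring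
  · rw [abs_of_nonneg (not_lt.1 hr), abs_of_nonneg (by linarith)]; ring

theorem lp.exists_abs_add_smul_eq_on (x : ℓ∞) (A : Set ℕ) :
    ∃ H : ℓ∞, (∀ n ∈ A, ∀ t ≥ 0, |(x + t • H) n| = |x n| + t) ∧
      ∀ n ∉ A, ∀ t : ℝ, (x + t • H) n = x n := by
  set e : ℕ → ℝ := A.indicator fun n => if x n < 0 then -1 else 1
  have he : Memℓp e ⊤ := memℓp_infty ⟨1, by
    rintro - ⟨n, rfl⟩
    by_cases hn : n ∈ A <;> simp [e, hn, apply_ite]⟩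
  refine ⟨⟨e, he⟩, fun n hn t ht => ?_, fun n hn t => ?_⟩
  · change |x n + t * e n| = _
    simpa [e, hn] using abs_add_mul_ite_neg (x n) ht
  · change x n + t * e n = _
    simp [e, hn]

/-- The seminorm `φ(x) = limsupₙ |xₙ|` on ℓ∞(ℝ) is Gâteaux differentiable at no point. -/
theorem limsup_abs_not_gateaux (x : lp (fun _ : ℕ => ℝ) ⊤) :
    ¬ ∃ u : lp (fun _ : ℕ => ℝ) ⊤ →L[ℝ] ℝ,
        IsGateauxDerivAt
          (fun y : lp (fun _ : ℕ => ℝ) ⊤ => Filter.limsup (fun n : ℕ => |y n|) Filter.atTop)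
          u x := by
  rintro ⟨u, hu⟩
  obtain ⟨ψ, hψ, hlim⟩ := exists_strictMono_tendsto_limsup (lp.isCoboundedUnder_abs x)
    (lp.isBoundedUnder_abs x)
  obtain ⟨H, hA, hAc⟩ := lp.exists_abs_add_smul_eq_on x (Set.range fun i => ψ (2 * i))
  have h_even : StrictMono fun i : ℕ => 2 * i := fun _ _ h => by dsimp only; omega
  have h_odd : StrictMono fun i : ℕ => 2 * i + 1 := fun _ _ h => by dsimp only; omega
  have hpos : ∀ t > (0 : ℝ), limsup (fun n => |x n|) atTop + t ≤
      limsup (fun n => |(x + t • H) n|) atTop := fun t ht => by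
    refine le_limsup_of_tendsto_comp (hψ.comp h_even).tendsto_atTop ?_ (lp.isBoundedUnder_abs _)
    exact ((hlim.comp h_even.tendsto_atTop).add_const t).congr fun i =>
      (hA _ ⟨i, rfl⟩ t ht.le).symm
  have hneg : ∀ t < (0 : ℝ), limsup (fun n => |x n|) atTop ≤
      limsup (fun n => |(x + t • H) n|) atTop := fun t _ => by
    have hodd (i : ℕ) : ψ (2 * i + 1) ∉ Set.range fun i => ψ (2 * i) := by
      rintro ⟨j, hj⟩
      have := hψ.injective hj
      omega
    refine le_limsup_of_tendsto_comp (hψ.comp h_odd).tendsto_atTop ?_ (lp.isBoundedUnder_abs _)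
    exact (hlim.comp h_odd.tendsto_atTop).congr fun i => by
      simp only [Function.comp_apply, hAc _ (hodd i) t]
  linarith [hu.le_apply_of_forall_pos H (c := 1) (by simpa using hpos),
    hu.apply_nonpos_of_forall_neg H hneg]
end

section
/- The total variation norm φ(f) = V_a^b(f) on the space BV₀[a,b] of functions of bounded variation on [a,b] with f(a) = 0 is not Gâteaux differentiable at any point. -/
open Filter Topology Set

/-- The total variation of `f` on `[a, b]`, as a real number. -/
noncomputable def totalVar (a b : ℝ) (f : ℝ → ℝ) : ℝ :=
  (eVariationOn f (Set.Icc a b)).toReal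

/-!
The variation function `x ↦ V_a^x f` is monotone, hence continuous at some `c ∈ (a, b)`, so `f`
has arbitrarily small variation on small intervals around `c`. Adding a jump of height `t` at `c`
therefore raises the total variation by at least `|t|`: `V(f + t • 1_[c,∞)) ≥ V(f) + |t|`. In the
direction of this step the difference quotients are `≥ 1` for `t > 0` and `≤ -1` for `t < 0`,
so they have no limit.
-/

theorem eVariationOn.add_le {α E : Type*} [LinearOrder α] [SeminormedAddCommGroup E]
    (f g : α → E) (s : Set α) :
    eVariationOn (f + g) s ≤ eVariationOn f s + eVariationOn g s := by
  refine iSup_le fun ⟨n, u, hu, us⟩ => ?_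
  calc ∑ i ∈ Finset.range n, edist ((f + g) (u (i + 1))) ((f + g) (u i))
      ≤ ∑ i ∈ Finset.range n,
          (edist (f (u (i + 1))) (f (u i)) + edist (g (u (i + 1))) (g (u i))) :=
        Finset.sum_le_sum fun i _ => edist_add_add_le _ _ _ _
    _ ≤ eVariationOn f s + eVariationOn g s := by
      rw [Finset.sum_add_distrib]
      exact add_le_add (eVariationOn.sum_le hu us) (eVariationOn.sum_le hu us)

theorem BoundedVariationOn.add {α E : Type*} [LinearOrder α] [SeminormedAddCommGroup E]
    {f g : α → E} {s : Set α} (hf : BoundedVariationOn f s) (hg : BoundedVariationOn g s) :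
    BoundedVariationOn (f + g) s :=
  ((eVariationOn.add_le f g s).trans_lt (ENNReal.add_lt_top.2 ⟨hf.lt_top, hg.lt_top⟩)).ne

theorem eVariationOn.add_const {α E : Type*} [LinearOrder α] [SeminormedAddCommGroup E]
    (f : α → E) (s : Set α) (v : E) :
    eVariationOn (fun x => f x + v) s = eVariationOn f s := by
  simp only [eVariationOn, edist_add_right]

theorem boundedVariationOn_indicator_Ici_one {α : Type*} [LinearOrder α] (c : α) (s : Set α) :
    BoundedVariationOn ((Ici c).indicator (1 : α → ℝ)) s := by
  refine MonotoneOn.boundedVariationOn (C := 1) (fun x _ y _ hxy => ?_) fun x _ => ?_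
  · by_cases hx : c ≤ x
    · simp [indicator_of_mem (show y ∈ Ici c from hx.trans hxy),
        indicator_of_mem (show x ∈ Ici c from hx)]
    · simp [indicator_of_notMem (show x ∉ Ici c from hx), indicator_nonneg]
  · by_cases hx : c ≤ x <;> simp [indicator, hx]

theorem variationOnFromTo.abs_sub_le {α : Type*} [LinearOrder α] {f : α → ℝ} {s : Set α}
    (hf : LocallyBoundedVariationOn f s) {x y : α}
    (hx : x ∈ s) (hy : y ∈ s) (hxy : x ≤ y) : |f y - f x| ≤ variationOnFromTo f s x y := by
  simpa [variationOnFromTo.self] using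
    variationOnFromTo.abs_sub_le_sub_of_le hf hx hx hy hxy

theorem exists_mem_Ioo_continuousAt_variationOnFromTo {f : ℝ → ℝ} {a b : ℝ}
    (hf : LocallyBoundedVariationOn f (Icc a b)) (hab : a < b) :
    ∃ c ∈ Ioo a b, ContinuousAt (variationOnFromTo f (Icc a b) a) c := by
  have hcount := (variationOnFromTo.monotoneOn hf
    (left_mem_Icc.2 hab.le)).countable_not_continuousWithinAt
  by_contra! H
  refine (Cardinal.Real.Ioo_countable_iff.not.2 (not_le.2 hab)) (hcount.mono fun c hc => ?_)
  exact ⟨Ioo_subset_Icc_self hc, fun h => H c hc (h.continuousAt (Icc_mem_nhds hc.1 hc.2))⟩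

theorem exists_variationOnFromTo_lt_of_continuousAt {f : ℝ → ℝ} {s : Set ℝ} {a c ε : ℝ}
    (hf : LocallyBoundedVariationOn f s) (ha : a ∈ s) (hs : s ∈ 𝓝 c)
    (hc : ContinuousAt (variationOnFromTo f s a) c) (hε : 0 < ε) :
    ∃ x ∈ s, ∃ y ∈ s, x < c ∧ c < y ∧ variationOnFromTo f s x y < ε := by
  have hnear : ∀ᶠ z in 𝓝 c,
      z ∈ s ∧ dist (variationOnFromTo f s a z) (variationOnFromTo f s a c) < ε / 2 :=
    inter_mem hs (hc.eventually (Metric.ball_mem_nhds _ (half_pos hε)))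
  obtain ⟨x, ⟨hxs, hx⟩, hxc⟩ := ((hnear.filter_mono nhdsWithin_le_nhds).and self_mem_nhdsWithin :
    ∀ᶠ z in 𝓝[<] c, _).exists
  obtain ⟨y, ⟨hys, hy⟩, hcy⟩ := ((hnear.filter_mono nhdsWithin_le_nhds).and self_mem_nhdsWithin :
    ∀ᶠ z in 𝓝[>] c, _).exists
  refine ⟨x, hxs, y, hys, hxc, hcy, ?_⟩
  rw [← variationOnFromTo.sub_right hf ha hys hxs]
  rw [Real.dist_eq, abs_lt] at hx hy
  linarith [hx.1, hy.2]

theorem totalVar_eq_variationOnFromTo {a b : ℝ} (hab : a ≤ b) (f : ℝ → ℝ) :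
    totalVar a b f = variationOnFromTo f (Icc a b) a b := by
  rw [variationOnFromTo.eq_of_le _ _ hab, inter_self, totalVar]

theorem totalVar_add_abs_le {f : ℝ → ℝ} {a b c : ℝ} (hf : BoundedVariationOn f (Icc a b))
    (hc : c ∈ Ioo a b) (hcont : ContinuousAt (variationOnFromTo f (Icc a b) a) c) (t : ℝ) :
    totalVar a b f + |t| ≤ totalVar a b (f + t • (Ici c).indicator 1) := by
  set g := f + t • (Ici c).indicator 1
  have hg : LocallyBoundedVariationOn g (Icc a b) :=
    (hf.add ((lipschitzWith_smul t).comp_boundedVariationOn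
      (boundedVariationOn_indicator_Ici_one c _))).locallyBoundedVariationOn
  have hf' := hf.locallyBoundedVariationOn
  have ha : a ∈ Icc a b := left_mem_Icc.2 (hc.1.trans hc.2).le
  have hb : b ∈ Icc a b := right_mem_Icc.2 (hc.1.trans hc.2).le
  rw [totalVar_eq_variationOnFromTo ha.2, totalVar_eq_variationOnFromTo ha.2]
  refine le_of_forall_pos_lt_add fun ε hε => ?_
  obtain ⟨x, hx, y, hy, hxc, hcy, hsmall⟩ := exists_variationOnFromTo_lt_of_continuousAt hf' ha
    (Icc_mem_nhds hc.1 hc.2) hcont (half_pos hε)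
  have hleft : variationOnFromTo g (Icc a b) a x = variationOnFromTo f (Icc a b) a x := by
    rw [variationOnFromTo.eq_of_le _ _ hx.1, variationOnFromTo.eq_of_le _ _ hx.1]
    refine congrArg _ (eVariationOn.eq_of_eqOn fun z hz => ?_)
    simp [g, indicator_of_notMem (show z ∉ Ici c from not_le.2 (hz.2.2.trans_lt hxc))]
  have hright : variationOnFromTo g (Icc a b) y b = variationOnFromTo f (Icc a b) y b := by
    rw [variationOnFromTo.eq_of_le _ _ hy.2, variationOnFromTo.eq_of_le _ _ hy.2,
      ← eVariationOn.add_const f _ t]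
    refine congrArg _ (eVariationOn.eq_of_eqOn fun z hz => ?_)
    simp [g, indicator_of_mem (show z ∈ Ici c from hcy.le.trans hz.2.1)]
  have hjump : g y - g x = f y - f x + t := by
    simp [g, indicator_of_mem (show y ∈ Ici c from hcy.le),
      indicator_of_notMem (show x ∉ Ici c from not_le.2 hxc)]
    ring
  have hmid : |t| ≤ variationOnFromTo g (Icc a b) x y + variationOnFromTo f (Icc a b) x y :=
    calc |t| = |(g y - g x) - (f y - f x)| := by rw [hjump, add_sub_cancel_left]
      _ ≤ |g y - g x| + |f y - f x| := abs_sub _ _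
      _ ≤ _ := add_le_add (variationOnFromTo.abs_sub_le hg hx hy (hxc.trans hcy).le)
        (variationOnFromTo.abs_sub_le hf' hx hy (hxc.trans hcy).le)
  rw [← variationOnFromTo.add hf' ha hx hb, ← variationOnFromTo.add hf' hx hy hb,
    ← variationOnFromTo.add hg ha hx hb, ← variationOnFromTo.add hg hx hy hb, hleft, hright]
  linarith

theorem not_tendsto_div_of_add_abs_le {F : ℝ → ℝ} {y₀ L : ℝ} (hF : ∀ t, y₀ + |t| ≤ F t) :
    ¬ Tendsto (fun t => (F t - y₀) / t) (𝓝[≠] 0) (𝓝 L) := by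
  intro hL
  have hpos : 1 ≤ L := ge_of_tendsto (hL.mono_left (nhdsGT_le_nhdsNE 0))
    (eventually_nhdsWithin_of_forall fun t (ht : 0 < t) => by
      rw [le_div_iff₀ ht]; linarith [hF t, abs_of_pos ht])
  have hneg : L ≤ -1 := le_of_tendsto (hL.mono_left (nhdsLT_le_nhdsNE 0))
    (eventually_nhdsWithin_of_forall fun t (ht : t < 0) => by
      rw [div_le_iff_of_neg ht]; linarith [hF t, abs_of_neg ht])
  linarith

theorem totalVar_not_gateaux_general (a b : ℝ) (hab : a < b) (f : ℝ → ℝ)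
    (hf : BoundedVariationOn f (Set.Icc a b)) :
    ¬ ∃ u : (ℝ → ℝ) →ₗ[ℝ] ℝ, ∀ h : ℝ → ℝ, h a = 0 → BoundedVariationOn h (Set.Icc a b) →
        Tendsto (fun t : ℝ => (totalVar a b (f + t • h) - totalVar a b f) / t)
          (𝓝[≠] (0 : ℝ)) (𝓝 (u h)) := by
  rintro ⟨u, hu⟩
  obtain ⟨c, hc, hcont⟩ :=
    exists_mem_Ioo_continuousAt_variationOnFromTo hf.locallyBoundedVariationOn hab
  exact not_tendsto_div_of_add_abs_le (totalVar_add_abs_le hf hc hcont)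
    (hu _ (indicator_of_notMem (not_le.2 hc.1) 1) (boundedVariationOn_indicator_Ici_one c _))

/-- The total variation norm on `NBV[a,b]` (functions of bounded variation on `[a,b]`
vanishing at `a`) is Gâteaux differentiable at no point: for no `f` in the space is there a
linear functional `u` giving the Gâteaux derivative in every direction `h` from the space. -/
theorem totalVar_not_gateaux (a b : ℝ) (hab : a < b) (f : ℝ → ℝ) (hfa : f a = 0)
    (hf : BoundedVariationOn f (Set.Icc a b)) :
    ¬ ∃ u : (ℝ → ℝ) →ₗ[ℝ] ℝ, ∀ h : ℝ → ℝ, h a = 0 → BoundedVariationOn h (Set.Icc a b) →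
        Tendsto (fun t : ℝ => (totalVar a b (f + t • h) - totalVar a b f) / t)
          (𝓝[≠] (0 : ℝ)) (𝓝 (u h)) :=
  totalVar_not_gateaux_general a b hab f hf
end
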